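/- Let Γ be a Brauer configuration and V a polygon satisfying condition (E). For each f ∈ H₄(V), there exists a unique e ∈ V such that σ^{-1}(e) ∉ V and n_V(f) = \overline{σ^{-1}(e)}. -/

import Mathlib

open Finset

noncomputable section
open scoped Classical

variable {H : Type*} [Fintype H]

/-- The setoid on angles whose classes are the `σ`-orbits (the *vertices*). -/
def orbitSetoid (σ : Equiv.Perm H) : Setoid H :=
  ⟨σ.SameCycle, ⟨fun x => Equiv.Perm.SameCycle.refl σ x,
    fun h => h.symm, fun h1 h2 => h1.trans h2⟩⟩

/-- Vertices of a Brauer configuration: `σ`-orbits of angles. -/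
abbrev Vertex (σ : Equiv.Perm H) := Quotient (orbitSetoid σ)

/-- Polygons of a Brauer configuration: `ψ`-equivalence classes of angles. -/
abbrev BrauerPolygon (ψ : Setoid H) := Quotient ψ

/-- The canonical surjection `s : H → H/⟨σ⟩`. -/
def vtx (σ : Equiv.Perm H) (h : H) : Vertex σ := Quotient.mk _ h

/-- The canonical surjection `H → H/ψ`. -/
def pgn (ψ : Setoid H) (h : H) : BrauerPolygon ψ := Quotient.mk _ h

/-- Valency of a vertex: the cardinality of `s⁻¹(u)`. -/
def valency (σ : Equiv.Perm H) (u : Vertex σ) : ℕ :=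
  (univ.filter fun h => vtx σ h = u).card

/-- `occ(u, V)` : the number of angles of the polygon `V` lying on the vertex `u`. -/
def occ (σ : Equiv.Perm H) (ψ : Setoid H) (u : Vertex σ) (V : BrauerPolygon ψ) : ℕ :=
  (univ.filter fun h => vtx σ h = u ∧ pgn ψ h = V).card

/-- Number of angles of a polygon (`#V`). -/
def polyCard (ψ : Setoid H) (V : BrauerPolygon ψ) : ℕ :=
  (univ.filter fun h => pgn ψ h = V).card

/-- The data `(H, σ, ψ, s, 𝔪)` is a Brauer configuration: `H` is nonempty,
every `ψ`-class has at least two elements, and the multiplicity is positive. -/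
def IsBrauerConfig (σ : Equiv.Perm H) (ψ : Setoid H) (m : Vertex σ → ℕ) : Prop :=
  Nonempty H ∧ (∀ h : H, ∃ h', h' ≠ h ∧ ψ.r h h') ∧ (∀ v, 0 < m v)

/-- The angle `h` belongs to the polygon `V`. -/
def inPoly (ψ : Setoid H) (V : BrauerPolygon ψ) (h : H) : Prop := pgn ψ h = V

/-- `H₁(V) = {e ∈ V : s⁻¹(s(e)) ⊆ V}`. -/
def H1 (σ : Equiv.Perm H) (ψ : Setoid H) (V : BrauerPolygon ψ) : Set H :=
  {e | inPoly ψ V e ∧ ∀ h, σ.SameCycle e h → inPoly ψ V h}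

/-- `H₂(V) = {e ∈ V : s⁻¹(s(e)) ⊄ V, σ(e) ∈ V}`. -/
def H2 (σ : Equiv.Perm H) (ψ : Setoid H) (V : BrauerPolygon ψ) : Set H :=
  {e | inPoly ψ V e ∧ ¬ (∀ h, σ.SameCycle e h → inPoly ψ V h) ∧ inPoly ψ V (σ e)}

/-- `H₃(V) = {e ∈ V : s⁻¹(s(e)) ⊄ V, σ(e) ∉ V}`. -/
def H3 (σ : Equiv.Perm H) (ψ : Setoid H) (V : BrauerPolygon ψ) : Set H :=
  {e | inPoly ψ V e ∧ ¬ (∀ h, σ.SameCycle e h → inPoly ψ V h) ∧ ¬ inPoly ψ V (σ e)}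

/-- `c = min {i ≥ 1 : σ^{-i}(f) ∉ V}`. -/
def pSteps (σ : Equiv.Perm H) (ψ : Setoid H) (V : BrauerPolygon ψ) (f : H) : ℕ :=
  sInf {i : ℕ | 1 ≤ i ∧ ¬ inPoly ψ V ((σ.symm ^ i) f)}

/-- `p_V(f) = σ^{-c}(f)`. -/
def pV (σ : Equiv.Perm H) (ψ : Setoid H) (V : BrauerPolygon ψ) (f : H) : H :=
  (σ.symm ^ pSteps σ ψ V f) f

/-- `d = min {j ≥ 1 : σ^{j}(f) ∉ V}`. -/
def nSteps (σ : Equiv.Perm H) (ψ : Setoid H) (V : BrauerPolygon ψ) (f : H) : ℕ :=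
  sInf {j : ℕ | 1 ≤ j ∧ ¬ inPoly ψ V ((σ ^ j) f)}

/-- `n_V(f) = σ^{d}(f)`. -/
def nV (σ : Equiv.Perm H) (ψ : Setoid H) (V : BrauerPolygon ψ) (f : H) : H :=
  (σ ^ nSteps σ ψ V f) f

/-- The polygon of `h` is a `2`-gon (an *edge*). -/
def isEdge (ψ : Setoid H) (h : H) : Prop :=
  (univ.filter fun x => ψ.r h x).card = 2

/-- For an angle of an edge `{h, h'}`, `bar h = h'`; junk value otherwise. -/
def bar (ψ : Setoid H) (h : H) : H :=
  if hx : ∃ x, x ≠ h ∧ ψ.r h x ∧ ∀ y, y ≠ h → ψ.r h y → y = x then hx.choose else h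

/-- Condition (E): every predecessor of `V` around each vertex is an edge or `V` itself. -/
def condE (σ : Equiv.Perm H) (ψ : Setoid H) (V : BrauerPolygon ψ) : Prop :=
  ∀ e : H, inPoly ψ V e → isEdge ψ (σ.symm e) ∨ pgn ψ (σ.symm e) = V

/-- `H₄(V) = {f ∈ H∖V : ∃ e ∈ V, σ⁻¹(e) ∉ V, n_V(f) = bar(σ⁻¹(e))}`. -/
def H4 (σ : Equiv.Perm H) (ψ : Setoid H) (V : BrauerPolygon ψ) : Set H :=
  {f | ¬ inPoly ψ V f ∧ ∃ e, inPoly ψ V e ∧ ¬ inPoly ψ V (σ.symm e) ∧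
    nV σ ψ V f = bar ψ (σ.symm e)}

/-- `H₅(V) = {f ∈ H∖V : ∀ e ∈ V with σ⁻¹(e) ∉ V, n_V(f) ≠ bar(σ⁻¹(e))}`. -/
def H5 (σ : Equiv.Perm H) (ψ : Setoid H) (V : BrauerPolygon ψ) : Set H :=
  {f | ¬ inPoly ψ V f ∧ ∀ e, inPoly ψ V e → ¬ inPoly ψ V (σ.symm e) →
    nV σ ψ V f ≠ bar ψ (σ.symm e)}

/-- For `f ∈ H₄(V)`, the unique `e ∈ V` with `n_V(f) = bar(σ⁻¹(e))`; junk otherwise. -/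
def xF (σ : Equiv.Perm H) (ψ : Setoid H) (V : BrauerPolygon ψ) (f : H) : H :=
  if hx : ∃ e, inPoly ψ V e ∧ ¬ inPoly ψ V (σ.symm e) ∧ nV σ ψ V f = bar ψ (σ.symm e)
  then hx.choose else f

/-- The underlying map `σ'` of the left flip at `V` (Table 1). -/
def flipFun (σ : Equiv.Perm H) (ψ : Setoid H) (V : BrauerPolygon ψ) (h : H) : H :=
  if h ∈ H1 σ ψ V ∨ h ∈ H2 σ ψ V then σ h
  else if h ∈ H3 σ ψ V then bar ψ (pV σ ψ V h)
  else if h ∈ H4 σ ψ V then xF σ ψ V h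
  else nV σ ψ V h

/-- The orbit setoid of the flipped map `σ'` (vertices of the flipped configuration). -/
def flipOrbitSetoid (σ : Equiv.Perm H) (ψ : Setoid H) (V : BrauerPolygon ψ) : Setoid H :=
  Relation.EqvGen.setoid (fun a b => flipFun σ ψ V a = b)

/-- The canonical surjection `s'` of the flipped configuration. -/
def vtx' (σ : Equiv.Perm H) (ψ : Setoid H) (V : BrauerPolygon ψ) (h : H) :
    Quotient (flipOrbitSetoid σ ψ V) := Quotient.mk _ h

/-- The vertex of `Γ` corresponding (via the table defining the flip) to the
`σ'`-orbit of an angle `h`. -/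
def gammaFun (σ : Equiv.Perm H) (ψ : Setoid H) (V : BrauerPolygon ψ) (h : H) : Vertex σ :=
  if h ∈ H2 σ ψ V ∨ h ∈ H3 σ ψ V then vtx σ (bar ψ (pV σ ψ V h)) else vtx σ h

/-- `occ'(v, V) = #{e ∈ H₂(V) ⊔ H₃(V) : s(bar(p_V(e))) = v}`. -/
def occ' (σ : Equiv.Perm H) (ψ : Setoid H) (V : BrauerPolygon ψ) (v : Vertex σ) : ℕ :=
  (univ.filter fun e => (e ∈ H2 σ ψ V ∨ e ∈ H3 σ ψ V) ∧
    vtx σ (bar ψ (pV σ ψ V e)) = v).card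

/-- `χ(U)` : the multiplicity of `P_U` in `T_V⁰`, i.e. the number of
`e ∈ H₂(V) ⊔ H₃(V)` with `[p_V(e)] = U`. -/
def chi (σ : Equiv.Perm H) (ψ : Setoid H) (V U : BrauerPolygon ψ) : ℕ :=
  (univ.filter fun e => (e ∈ H2 σ ψ V ∨ e ∈ H3 σ ψ V) ∧
    pgn ψ (pV σ ψ V e) = U).card

lemma exists_unique_partner_of_isEdge {ψ : Setoid H} {h : H} (hE : isEdge ψ h) :
    ∃ x, x ≠ h ∧ ψ.r h x ∧ ∀ y, y ≠ h → ψ.r h y → y = x := by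
  set s := univ.filter fun x => ψ.r h x
  have mem_erase : ∀ y, y ∈ s.erase h ↔ y ≠ h ∧ ψ.r h y := by simp [s]
  have hcard : (s.erase h).card = 1 := by
    rw [card_erase_of_mem (by simp [s]), hE]
  obtain ⟨x, hx⟩ := card_eq_one.mp hcard
  obtain ⟨hxh, hrel⟩ := (mem_erase x).mp (hx ▸ mem_singleton_self x)
  exact ⟨x, hxh, hrel, fun y hy hr => mem_singleton.mp (hx ▸ (mem_erase y).mpr ⟨hy, hr⟩)⟩

lemma bar_spec_of_isEdge {ψ : Setoid H} {h : H} (hE : isEdge ψ h) :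
    bar ψ h ≠ h ∧ ψ.r h (bar ψ h) ∧ ∀ y, y ≠ h → ψ.r h y → y = bar ψ h := by
  have hex := exists_unique_partner_of_isEdge hE
  rw [bar, dif_pos hex]
  exact hex.choose_spec

lemma eq_of_bar_eq_of_isEdge {ψ : Setoid H} {h h' : H} (hE : isEdge ψ h) (hE' : isEdge ψ h')
    (hbar : bar ψ h = bar ψ h') : h = h' := by
  obtain ⟨-, hrel, huniq⟩ := bar_spec_of_isEdge hE
  obtain ⟨hne', hrel', -⟩ := bar_spec_of_isEdge hE'
  by_contra hne
  have hh' : ψ.r h h' := ψ.trans hrel (hbar ▸ ψ.symm hrel')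
  exact hne' ((huniq h' (Ne.symm hne) hh').trans hbar).symm

lemma isEdge_symm_apply_of_condE {σ : Equiv.Perm H} {ψ : Setoid H} {V : BrauerPolygon ψ}
    (hE : condE σ ψ V) {e : H} (he : inPoly ψ V e) (he' : ¬ inPoly ψ V (σ.symm e)) :
    isEdge ψ (σ.symm e) :=
  (hE e he).resolve_right he'

theorem xF_exists_unique_general
    (σ : Equiv.Perm H) (ψ : Setoid H) (V : BrauerPolygon ψ) (hE : condE σ ψ V)
    (f : H) (hf : f ∈ H4 σ ψ V) :
    ∃! e : H, inPoly ψ V e ∧ ¬ inPoly ψ V (σ.symm e) ∧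
      nV σ ψ V f = bar ψ (σ.symm e) := by
  obtain ⟨-, e, he⟩ := hf
  refine ⟨e, he, fun e' he' => σ.symm.injective ?_⟩
  exact eq_of_bar_eq_of_isEdge (isEdge_symm_apply_of_condE hE he'.1 he'.2.1)
    (isEdge_symm_apply_of_condE hE he.1 he.2.1) (he'.2.2.symm.trans he.2.2)

theorem xF_exists_unique
    (σ : Equiv.Perm H) (ψ : Setoid H) (m : Vertex σ → ℕ)
    (hΓ : IsBrauerConfig σ ψ m) (V : BrauerPolygon ψ) (hE : condE σ ψ V)
    (f : H) (hf : f ∈ H4 σ ψ V) :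
    ∃! e : H, inPoly ψ V e ∧ ¬ inPoly ψ V (σ.symm e) ∧
      nV σ ψ V f = bar ψ (σ.symm e) :=
  xF_exists_unique_general σ ψ V hE f hf
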